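/- arXiv:2308.16273 — 2 statements merged into one kernel-verified Lean document; each statement's English description precedes it below -/
import Mathlib

section
/- Let R be a differential ring with derivation ', let a, b, c, d ∈ R be constants, and let x₁, x₂ ∈ R satisfy x₁' = a·x₁ − b·x₁·x₂ and x₂' = −c·x₂ + d·x₁·x₂. Set y = x₁. Then y·y'' − (y')² − d·y²·y' + c·y·y' + a·d·y³ − a·c·y² = 0. -/
/-!
Solving the first equation for the unobserved state gives `b x₁ x₂ = a x₁ − x₁'`. Differentiating
the first equation once more and substituting `x₂'` from the second equation, every occurrence of
`x₂` comes multiplied by `b x₁`, so after multiplying by `x₁` it can be eliminated.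
-/

def Derivation.ofAddMul {R : Type*} [CommRing R] (δ : R → R)
    (hadd : ∀ x y, δ (x + y) = δ x + δ y) (hmul : ∀ x y, δ (x * y) = δ x * y + x * δ y) :
    Derivation ℤ R R :=
  Derivation.mk' (AddMonoidHom.mk' δ hadd).toIntLinearMap fun x y => by
    simp only [AddMonoidHom.coe_toIntLinearMap, AddMonoidHom.mk'_apply, hmul, smul_eq_mul]
    ring

section LotkaVolterra

variable {A R : Type*} [CommRing A] [CommRing R] [Algebra A R] (D : Derivation A R R)
  {a b c d x₁ x₂ : R}

theorem lotkaVolterra_deriv_deriv_fst (ha : D a = 0) (hb : D b = 0)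
    (h1 : D x₁ = a * x₁ - b * x₁ * x₂) :
    D (D x₁) = a * D x₁ - b * (D x₁ * x₂ + x₁ * D x₂) := by
  rw [congrArg D h1]
  simp only [Derivation.map_sub, Derivation.leibniz, ha, hb, smul_eq_mul]
  ring

theorem lotkaVolterra_inputOutput (ha : D a = 0) (hb : D b = 0)
    (h1 : D x₁ = a * x₁ - b * x₁ * x₂) (h2 : D x₂ = -c * x₂ + d * x₁ * x₂) :
    x₁ * D (D x₁) - (D x₁) ^ 2 - d * x₁ ^ 2 * D x₁ + c * x₁ * D x₁ +
      a * d * x₁ ^ 3 - a * c * x₁ ^ 2 = 0 := by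
  have elim_x₂ : b * x₁ * x₂ = a * x₁ - D x₁ := by rw [h1]; ring
  rw [lotkaVolterra_deriv_deriv_fst D ha hb h1, h2]
  linear_combination (-(D x₁) - x₁ * (d * x₁ - c)) * elim_x₂

end LotkaVolterra

theorem stmt_7_general {R : Type*} [CommRing R] (δ : R → R)
    (hadd : ∀ x y, δ (x + y) = δ x + δ y)
    (hmul : ∀ x y, δ (x * y) = δ x * y + x * δ y)
    (a b c d x₁ x₂ : R) (ha : δ a = 0) (hb : δ b = 0)
    (h1 : δ x₁ = a * x₁ - b * x₁ * x₂) (h2 : δ x₂ = -c * x₂ + d * x₁ * x₂) :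
    x₁ * δ (δ x₁) - (δ x₁) ^ 2 - d * x₁ ^ 2 * δ x₁ + c * x₁ * δ x₁ +
      a * d * x₁ ^ 3 - a * c * x₁ ^ 2 = 0 :=
  lotkaVolterra_inputOutput (Derivation.ofAddMul δ hadd hmul) ha hb h1 h2

/-- Input-output equation of the Lotka–Volterra system `x₁' = a x₁ − b x₁ x₂`,
`x₂' = −c x₂ + d x₁ x₂`, with output `y = x₁`:
`y y'' − (y')² − d y² y' + c y y' + a d y³ − a c y² = 0`. -/
theorem stmt_7 {R : Type*} [CommRing R] (δ : R → R)
    (hadd : ∀ x y, δ (x + y) = δ x + δ y)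
    (hmul : ∀ x y, δ (x * y) = δ x * y + x * δ y)
    (a b c d x₁ x₂ : R) (ha : δ a = 0) (hb : δ b = 0) (hc : δ c = 0) (hd : δ d = 0)
    (h1 : δ x₁ = a * x₁ - b * x₁ * x₂) (h2 : δ x₂ = -c * x₂ + d * x₁ * x₂) :
    x₁ * δ (δ x₁) - (δ x₁) ^ 2 - d * x₁ ^ 2 * δ x₁ + c * x₁ * δ x₁ +
      a * d * x₁ ^ 3 - a * c * x₁ ^ 2 = 0 :=
  stmt_7_general δ hadd hmul a b c d x₁ x₂ ha hb h1 h2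
end

section
/- Let R be a differential ring containing ℚ, let k₁, k₂ ∈ R be constants with this derivation, and suppose w₁, w₂, w₃ ∈ R satisfy w₁' = k₂w₃ − k₁w₁(w₃ + 2w₂), w₂' = −k₁w₁(w₃ + 2w₂) + k₂w₃, and w₃' = k₁w₁(w₃ + 2w₂) − k₂w₃. Set y = w₁. Then y'·y''' − (y'')² + 2k₁(y')³ = 0. -/
/-!
Since `w₂' = w₁'` and `w₃' = -w₁'`, both `w₁ + w₃` and `w₃ + 2 w₂ - w₁` are constants, so
`y = w₁` satisfies a Riccati equation `y' = a + b y + c y²` with constant coefficients and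
`c = -k₁`. Differentiating it gives `y'' = (b + 2 c y) y'` and
`y''' = 2 c y'² + (b + 2 c y) y''`, whence `y' y''' - y''² = 2 c y'³`.
-/

def Derivation.ofLeibniz {R : Type*} [CommRing R] (δ : R → R)
    (hadd : ∀ x y, δ (x + y) = δ x + δ y) (hmul : ∀ x y, δ (x * y) = δ x * y + x * δ y) :
    Derivation ℤ R R :=
  Derivation.mk' (AddMonoidHom.mk' δ hadd).toIntLinearMap fun x y => by
    simp only [AddMonoidHom.coe_toIntLinearMap, AddMonoidHom.mk'_apply, hmul, smul_eq_mul]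
    ring

@[simp]
theorem Derivation.map_ofNat {A R : Type*} [CommSemiring A] [CommSemiring R] [Algebra A R]
    (D : Derivation A R R) (n : ℕ) [n.AtLeastTwo] : D (ofNat(n) : R) = 0 := by
  rw [← Nat.cast_ofNat]
  exact D.map_natCast n

theorem Derivation.input_output_of_riccati {A R : Type*} [CommRing A] [CommRing R] [Algebra A R]
    (D : Derivation A R R) {a b c y : R} (ha : D a = 0) (hb : D b = 0) (hc : D c = 0)
    (hy : D y = a + b * y + c * y ^ 2) :
    D y * D (D (D y)) - D (D y) ^ 2 = 2 * c * D y ^ 3 := by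
  have hy₂ : D (D y) = (b + 2 * c * y) * D y := by
    rw [congrArg D hy]
    simp only [map_add, Derivation.leibniz, Derivation.leibniz_pow, ha, hb, hc, smul_eq_mul,
      nsmul_eq_mul]
    ring
  have hy₃ : D (D (D y)) = 2 * c * D y ^ 2 + (b + 2 * c * y) * D (D y) := by
    rw [congrArg D hy₂]
    simp only [map_add, Derivation.leibniz, hb, hc, smul_eq_mul, Derivation.map_ofNat]
    ring
  rw [hy₃, hy₂]
  ring

theorem stmt_11_general {R : Type*} [CommRing R] (δ : R → R)
    (hadd : ∀ x y, δ (x + y) = δ x + δ y)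
    (hmul : ∀ x y, δ (x * y) = δ x * y + x * δ y)
    (k₁ k₂ w₁ w₂ w₃ : R) (hk₁ : δ k₁ = 0) (hk₂ : δ k₂ = 0)
    (h1 : δ w₁ = k₂ * w₃ - k₁ * w₁ * (w₃ + 2 * w₂))
    (h2 : δ w₂ = -(k₁ * w₁ * (w₃ + 2 * w₂)) + k₂ * w₃)
    (h3 : δ w₃ = k₁ * w₁ * (w₃ + 2 * w₂) - k₂ * w₃) :
    δ w₁ * δ (δ (δ w₁)) - (δ (δ w₁)) ^ 2 + 2 * k₁ * (δ w₁) ^ 3 = 0 := by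
  set D := Derivation.ofLeibniz δ hadd hmul
  change D w₁ * D (D (D w₁)) - D (D w₁) ^ 2 + 2 * k₁ * D w₁ ^ 3 = 0
  replace hk₁ : D k₁ = 0 := hk₁
  replace hk₂ : D k₂ = 0 := hk₂
  replace h1 : D w₁ = _ := h1
  replace h2 : D w₂ = _ := h2
  replace h3 : D w₃ = _ := h3
  have hmass : D (k₂ * (w₁ + w₃)) = 0 := by
    simp only [Derivation.leibniz, map_add, hk₂, h1, h3, smul_eq_mul]
    ring
  have hbalance : D (-k₂ - k₁ * (w₃ + 2 * w₂ - w₁)) = 0 := by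
    simp only [Derivation.leibniz, map_add, map_sub, map_neg, hk₁, hk₂, h1, h2, h3, smul_eq_mul,
      Derivation.map_ofNat]
    ring
  have hriccati := D.input_output_of_riccati (c := -k₁) hmass hbalance
    (by rw [map_neg, hk₁, neg_zero]) (by rw [h1]; ring)
  linear_combination hriccati

/-- Input-output equation of the reduced chemical reaction network model:
for `y = w₁`, `y' y''' − (y'')² + 2k₁ (y')³ = 0`. -/
theorem stmt_11 {R : Type*} [CommRing R] [Algebra ℚ R] (δ : R → R)
    (hadd : ∀ x y, δ (x + y) = δ x + δ y)
    (hmul : ∀ x y, δ (x * y) = δ x * y + x * δ y)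
    (k₁ k₂ w₁ w₂ w₃ : R) (hk₁ : δ k₁ = 0) (hk₂ : δ k₂ = 0)
    (h1 : δ w₁ = k₂ * w₃ - k₁ * w₁ * (w₃ + 2 * w₂))
    (h2 : δ w₂ = -(k₁ * w₁ * (w₃ + 2 * w₂)) + k₂ * w₃)
    (h3 : δ w₃ = k₁ * w₁ * (w₃ + 2 * w₂) - k₂ * w₃) :
    δ w₁ * δ (δ (δ w₁)) - (δ (δ w₁)) ^ 2 + 2 * k₁ * (δ w₁) ^ 3 = 0 :=
  stmt_11_general δ hadd hmul k₁ k₂ w₁ w₂ w₃ hk₁ hk₂ h1 h2 h3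
end
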